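/- arXiv:1808.02967 — 5 statements merged into one kernel-verified Lean document; each statement's English description precedes it below -/
import Mathlib

section
/- If (Z,W) is a centered Gaussian vector in R² with Var(Z)=Var(W)=1 and E(ZW)=r, then for all natural numbers k, l, E[H_k(Z)·H_l(W)] = δ_{k,l}·r^k·k!, where H_n denotes the n-th probabilist's Hermite polynomial (Mehler's formula). -/
open MeasureTheory ProbabilityTheory

/-- The probabilist's Hermite polynomials, as real functions. -/
noncomputable def hermiteFun : ℕ → ℝ → ℝ
  | 0, _ => 1
  | 1, x => x
  | (n + 2), x => x * hermiteFun (n + 1) x - (n + 1) * hermiteFun n x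

/-!
For a standard Gaussian `X`, integration by parts against the density gives Stein's identity
`E[X P(X)] = E[P'(X)]` for every polynomial `P`. Combined with `H_{n+1} = X H_n - H_n'` and
`H_{n+1}' = (n+1) H_n` it yields `E[H_{k+1}(X) P(X)] = E[H_k(X) P'(X)]`, hence the orthogonality
`E[H_k(X) H_l(X)] = δ_{kl} k!`. Realise `(Z, W)` as `(X, rX + sY)` with `X, Y` independent
and `r² + s² = 1`. Integrating out `Y` first, the three-term recurrence and Stein's identity in
`Y` show `E[H_l(rx + sY)] = r^l H_l(x)`, so
`E[H_k(Z) H_l(W)] = r^l E[H_k(X) H_l(X)] = δ_{kl} r^k k!`.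
-/

open Polynomial
open scoped NNReal

theorem Polynomial.derivative_hermite_succ (n : ℕ) :
    derivative (hermite (n + 1)) = C ((n : ℤ) + 1) * hermite n := by
  induction n with
  | zero => simp
  | succ n ih =>
    rw [hermite_succ (n + 1), derivative_sub, derivative_mul, derivative_X, ih, derivative_mul,
      derivative_C, hermite_succ n]
    simp only [Nat.cast_add, Nat.cast_one, C_add, C_1]
    ring

noncomputable def hermiteReal (n : ℕ) : ℝ[X] := (hermite n).map (Int.castRingHom ℝ)

lemma hermiteReal_zero : hermiteReal 0 = 1 := by simp [hermiteReal]

lemma hermiteReal_succ (n : ℕ) :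
    hermiteReal (n + 1) = X * hermiteReal n - derivative (hermiteReal n) := by
  simp [hermiteReal, hermite_succ, derivative_map]

lemma derivative_hermiteReal_succ (n : ℕ) :
    derivative (hermiteReal (n + 1)) = C ((n : ℝ) + 1) * hermiteReal n := by
  rw [hermiteReal, derivative_map, derivative_hermite_succ, Polynomial.map_mul, map_C]
  simp [hermiteReal]

lemma hermiteReal_add_two (n : ℕ) :
    hermiteReal (n + 2) = X * hermiteReal (n + 1) - C ((n : ℝ) + 1) * hermiteReal n := by
  rw [hermiteReal_succ (n + 1), derivative_hermiteReal_succ]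

lemma hermiteFun_eq_eval : ∀ (n : ℕ) (x : ℝ), hermiteFun n x = (hermiteReal n).eval x
  | 0, x => by simp [hermiteFun, hermiteReal_zero]
  | 1, x => by simp [hermiteFun, hermiteReal_succ 0, hermiteReal_zero]
  | n + 2, x => by
    simp [hermiteFun, hermiteReal_add_two, hermiteFun_eq_eval (n + 1), hermiteFun_eq_eval n]

instance ENNReal.HolderTriple.two_mul_two_mul (p : ℝ≥0) :
    ENNReal.HolderTriple (2 * p : ℝ≥0) (2 * p : ℝ≥0) p where
  inv_add_inv_eq_inv := by
    rcases eq_or_ne p 0 with rfl | hp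
    · simp
    · rw [ENNReal.coe_mul, ENNReal.mul_inv (by simp) (by simp), ← two_mul, ← mul_assoc,
        ENNReal.coe_two, ENNReal.mul_inv_cancel two_ne_zero ENNReal.ofNat_ne_top, one_mul]

namespace MeasureTheory

variable {α : Type*} [MeasurableSpace α]

def finiteMomentsSubalgebra (ν : Measure α) [IsFiniteMeasure ν] :
    Subalgebra ℝ (α → ℝ) where
  carrier := {f | ∀ p : ℝ≥0, MemLp f p ν}
  mul_mem' hf hg p := (hg (2 * p)).mul (hf (2 * p))
  add_mem' hf hg p := (hf p).add (hg p)
  algebraMap_mem' c _ := memLp_const c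

variable {ν : Measure α} [IsFiniteMeasure ν] {f : α → ℝ}

lemma Integrable.of_mem_finiteMomentsSubalgebra (hf : f ∈ finiteMomentsSubalgebra ν) :
    Integrable f ν :=
  memLp_one_iff_integrable.1 (by simpa using hf 1)

lemma eval_comp_mem_finiteMomentsSubalgebra (hf : f ∈ finiteMomentsSubalgebra ν) (P : ℝ[X]) :
    (fun a => P.eval (f a)) ∈ finiteMomentsSubalgebra ν := by
  have := (aeval (⟨f, hf⟩ : finiteMomentsSubalgebra ν) P).2
  rw [aeval_subalgebra_coe] at this
  convert this using 1
  ext a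
  simp

end MeasureTheory

namespace ProbabilityTheory

variable {μ : ℝ} {v : ℝ≥0}

lemma integrable_gaussianReal_iff (hv : v ≠ 0) {f : ℝ → ℝ} :
    Integrable f (gaussianReal μ v) ↔ Integrable (fun x => f x * gaussianPDFReal μ v x) := by
  rw [gaussianReal_of_var_ne_zero _ hv, integrable_withDensity_iff_integrable_smul'
    (measurable_gaussianPDF μ v) (ae_of_all _ fun _ => gaussianPDF_lt_top)]
  simp only [toReal_gaussianPDF, smul_eq_mul, mul_comm]

lemma hasDerivAt_gaussianPDFReal (μ : ℝ) (v : ℝ≥0) (x : ℝ) :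
    HasDerivAt (gaussianPDFReal μ v) (-(x - μ) / v * gaussianPDFReal μ v x) x := by
  have hexponent : HasDerivAt (fun y => -(y - μ) ^ 2 / (2 * v)) (-(x - μ) / v) x :=
    (((hasDerivAt_id x).sub_const μ).pow 2).neg.div_const (2 * (v : ℝ)) |>.congr_deriv
      (by simp; ring)
  refine (hexponent.exp.const_mul (√(2 * Real.pi * v))⁻¹).congr_deriv ?_
  unfold gaussianPDFReal
  ring

lemma id_mem_finiteMomentsSubalgebra_gaussianReal :
    (fun x => x) ∈ finiteMomentsSubalgebra (gaussianReal μ v) :=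
  fun p => memLp_id_gaussianReal p

lemma integrable_eval_gaussianReal (P : ℝ[X]) :
    Integrable (fun x => P.eval x) (gaussianReal μ v) :=
  .of_mem_finiteMomentsSubalgebra <|
    eval_comp_mem_finiteMomentsSubalgebra id_mem_finiteMomentsSubalgebra_gaussianReal P

lemma integrable_eval_mul_gaussianPDFReal (μ : ℝ) (hv : v ≠ 0) (P : ℝ[X]) :
    Integrable (fun x => P.eval x * gaussianPDFReal μ v x) :=
  (integrable_gaussianReal_iff hv).1 (integrable_eval_gaussianReal P)

theorem integral_sub_mul_eval_gaussianReal (P : ℝ[X]) :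
    ∫ x, (x - μ) * P.eval x ∂gaussianReal μ v =
      v * ∫ x, (derivative P).eval x ∂gaussianReal μ v := by
  rcases eq_or_ne v 0 with rfl | hv
  · simp
  have hv' : (v : ℝ) ≠ 0 := NNReal.coe_ne_zero.2 hv
  have parts := integral_mul_deriv_eq_deriv_mul_of_integrable
    (u := fun x => P.eval x) (fun x _ => P.hasDerivAt x)
    (fun x _ => hasDerivAt_gaussianPDFReal μ v x)
    ((integrable_eval_mul_gaussianPDFReal μ hv ((X - C μ) * P)).const_mul (-(v : ℝ)⁻¹)
      |>.congr (ae_of_all _ fun x => by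
        simp only [eval_mul, eval_sub, eval_X, eval_C, Pi.mul_apply]
        ring))
    (integrable_eval_mul_gaussianPDFReal μ hv (derivative P))
    (integrable_eval_mul_gaussianPDFReal μ hv P)
  simp only [integral_gaussianReal_eq_integral_smul hv, smul_eq_mul]
  calc ∫ x, gaussianPDFReal μ v x * ((x - μ) * P.eval x)
      = ∫ x, -(v : ℝ) * (P.eval x * (-(x - μ) / v * gaussianPDFReal μ v x)) :=
        integral_congr_ae (ae_of_all _ fun x => by field_simp)
    _ = v * ∫ x, gaussianPDFReal μ v x * (derivative P).eval x := by
        simp only [integral_const_mul, parts, mul_comm (gaussianPDFReal μ v _)]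
        ring

end ProbabilityTheory

noncomputable def gaussianExpect : ℝ[X] →ₗ[ℝ] ℝ where
  toFun P := ∫ x, P.eval x ∂gaussianReal 0 1
  map_add' P Q := by
    simp only [eval_add]
    exact integral_add (integrable_eval_gaussianReal P) (integrable_eval_gaussianReal Q)
  map_smul' c P := by simp [integral_const_mul]

lemma gaussianExpect_apply (P : ℝ[X]) :
    gaussianExpect P = ∫ x, P.eval x ∂gaussianReal 0 1 := rfl

lemma gaussianExpect_C (c : ℝ) : gaussianExpect (C c) = c := by
  simp [gaussianExpect_apply]

lemma gaussianExpect_C_mul (c : ℝ) (P : ℝ[X]) :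
    gaussianExpect (C c * P) = c * gaussianExpect P := by
  rw [C_mul', map_smul, smul_eq_mul]

lemma gaussianExpect_X_mul (P : ℝ[X]) :
    gaussianExpect (X * P) = gaussianExpect (derivative P) := by
  simpa [gaussianExpect_apply] using integral_sub_mul_eval_gaussianReal (μ := 0) (v := 1) P

lemma gaussianExpect_hermiteReal_succ_mul (n : ℕ) (P : ℝ[X]) :
    gaussianExpect (hermiteReal (n + 1) * P) = gaussianExpect (hermiteReal n * derivative P) := by
  rw [hermiteReal_succ, sub_mul, map_sub, mul_assoc, gaussianExpect_X_mul, derivative_mul, map_add,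
    add_sub_cancel_left]

lemma gaussianExpect_hermiteReal_succ (n : ℕ) : gaussianExpect (hermiteReal (n + 1)) = 0 := by
  simpa using gaussianExpect_hermiteReal_succ_mul n 1

theorem gaussianExpect_hermiteReal_mul_hermiteReal (k l : ℕ) :
    gaussianExpect (hermiteReal k * hermiteReal l) = if k = l then (k.factorial : ℝ) else 0 := by
  induction k generalizing l with
  | zero =>
    cases l with
    | zero => simp [hermiteReal_zero, gaussianExpect_apply]
    | succ m => simp [hermiteReal_zero, gaussianExpect_hermiteReal_succ]
  | succ k ih =>
    cases l with
    | zero => simp [hermiteReal_zero, gaussianExpect_hermiteReal_succ]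
    | succ m =>
      rw [gaussianExpect_hermiteReal_succ_mul, derivative_hermiteReal_succ, mul_left_comm,
        gaussianExpect_C_mul, ih]
      split_ifs with h h' h'
      · subst h; push_cast [Nat.factorial_succ]; ring
      · omega
      · omega
      · simp

theorem gaussianExpect_hermiteReal_comp {r s : ℝ} (hrs : r ^ 2 + s ^ 2 = 1) (x : ℝ) :
    ∀ n, gaussianExpect ((hermiteReal n).comp (C (r * x) + C s * X)) =
      r ^ n * (hermiteReal n).eval x
  | 0 => by simp [hermiteReal_zero, gaussianExpect_apply]
  | 1 => by
    have hX : gaussianExpect X = 0 := by simpa using gaussianExpect_X_mul 1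
    simp [hermiteReal_succ 0, hermiteReal_zero, gaussianExpect_C, gaussianExpect_C_mul, hX]
  | n + 2 => by
    set Q := C (r * x) + C s * X
    have ih₁ := gaussianExpect_hermiteReal_comp hrs x (n + 1)
    have ih₀ := gaussianExpect_hermiteReal_comp hrs x n
    have hX : gaussianExpect (X * (hermiteReal (n + 1)).comp Q) =
        s * ((n + 1) * gaussianExpect ((hermiteReal n).comp Q)) := by
      rw [gaussianExpect_X_mul, derivative_comp, derivative_hermiteReal_succ, mul_comp, C_comp]
      simp only [Q, derivative_add, derivative_C, derivative_mul, derivative_X, zero_add, zero_mul,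
        mul_one, gaussianExpect_C_mul]
    have hcomp : (hermiteReal (n + 2)).comp Q = C (r * x) * (hermiteReal (n + 1)).comp Q +
        C s * (X * (hermiteReal (n + 1)).comp Q) - C ((n : ℝ) + 1) * (hermiteReal n).comp Q := by
      rw [hermiteReal_add_two, sub_comp, mul_comp, mul_comp, X_comp, C_comp]
      ring
    rw [hcomp, map_sub, map_add, gaussianExpect_C_mul, gaussianExpect_C_mul, gaussianExpect_C_mul,
      hX, ih₁, ih₀, hermiteReal_add_two]
    simp only [eval_sub, eval_mul, eval_X, eval_C]
    linear_combination ((n + 1) * r ^ n * (hermiteReal n).eval x) * hrs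

theorem integral_hermiteReal_mul_hermiteReal_gaussianReal_prod {r s : ℝ} (hrs : r ^ 2 + s ^ 2 = 1)
    (k l : ℕ) :
    ∫ z, (hermiteReal k).eval z.1 * (hermiteReal l).eval (r * z.1 + s * z.2)
      ∂(gaussianReal 0 1).prod (gaussianReal 0 1) =
      if k = l then r ^ k * (k.factorial : ℝ) else 0 := by
  have hfst : (fun z : ℝ × ℝ => z.1) ∈
      finiteMomentsSubalgebra ((gaussianReal 0 1).prod (gaussianReal 0 1)) :=
    fun p => (memLp_id_gaussianReal p).comp_fst _
  have hsnd : (fun z : ℝ × ℝ => z.2) ∈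
      finiteMomentsSubalgebra ((gaussianReal 0 1).prod (gaussianReal 0 1)) :=
    fun p => (memLp_id_gaussianReal p).comp_snd _
  have hint : Integrable
      (fun z : ℝ × ℝ => (hermiteReal k).eval z.1 * (hermiteReal l).eval (r * z.1 + s * z.2))
      ((gaussianReal 0 1).prod (gaussianReal 0 1)) := .of_mem_finiteMomentsSubalgebra <|
    mul_mem (eval_comp_mem_finiteMomentsSubalgebra hfst (hermiteReal k))
      (eval_comp_mem_finiteMomentsSubalgebra (add_mem (Subalgebra.smul_mem _ hfst r)
        (Subalgebra.smul_mem _ hsnd s)) (hermiteReal l))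
  have hinner (x : ℝ) : ∫ y, (hermiteReal l).eval (r * x + s * y) ∂gaussianReal 0 1 =
      r ^ l * (hermiteReal l).eval x := by
    simp [← gaussianExpect_hermiteReal_comp hrs x l, gaussianExpect_apply, eval_comp]
  rw [integral_prod _ hint]
  simp only [integral_const_mul, hinner]
  calc ∫ x, (hermiteReal k).eval x * (r ^ l * (hermiteReal l).eval x) ∂gaussianReal 0 1
      = r ^ l * gaussianExpect (hermiteReal k * hermiteReal l) := by
        rw [gaussianExpect_apply, ← integral_const_mul]
        simp only [eval_mul, mul_left_comm]
    _ = if k = l then r ^ k * (k.factorial : ℝ) else 0 := by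
        rw [gaussianExpect_hermiteReal_mul_hermiteReal]
        split_ifs with h
        · rw [h]
        · rw [mul_zero]

theorem mehler_formula_general {Ω : Type*} [MeasurableSpace Ω] (μ : Measure Ω)
    (Z W : Ω → ℝ) (r : ℝ) (hr : r ∈ Set.Icc (-1 : ℝ) 1)
    (hgauss : Measure.map (fun ω => (Z ω, W ω)) μ =
      Measure.map (fun p : ℝ × ℝ => (p.1, r * p.1 + Real.sqrt (1 - r ^ 2) * p.2))
        ((gaussianReal 0 1).prod (gaussianReal 0 1)))
    (k l : ℕ) :
    ∫ ω, hermiteFun k (Z ω) * hermiteFun l (W ω) ∂μ =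
      (if k = l then r ^ k * (Nat.factorial k : ℝ) else 0) := by
  set s := √(1 - r ^ 2)
  have hrs : r ^ 2 + s ^ 2 = 1 := by
    rw [Real.sq_sqrt (by nlinarith [hr.1, hr.2])]
    ring
  have hT : Measurable fun p : ℝ × ℝ => (p.1, r * p.1 + s * p.2) := by fun_prop
  -- a pushforward along a non-AE-measurable map is `0`, whereas the law in `hgauss` has mass one
  have hZW : AEMeasurable (fun ω => (Z ω, W ω)) μ := by
    have := Measure.isProbabilityMeasure_map
      (μ := (gaussianReal 0 1).prod (gaussianReal 0 1)) hT.aemeasurable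
    exact .of_map_ne_zero (hgauss ▸ IsProbabilityMeasure.ne_zero _)
  have hF : Continuous fun p : ℝ × ℝ => (hermiteReal k).eval p.1 * (hermiteReal l).eval p.2 :=
    by fun_prop
  simp only [hermiteFun_eq_eval]
  rw [← integral_hermiteReal_mul_hermiteReal_gaussianReal_prod hrs,
    ← integral_map hZW hF.aestronglyMeasurable, hgauss,
    integral_map hT.aemeasurable hF.aestronglyMeasurable]

/-- Mehler's formula: if `(Z, W)` is a centered Gaussian vector in `ℝ²` with
`Var Z = Var W = 1` and `E[Z W] = r` (equivalently, `(Z,W)` is distributed as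
`(X, r X + √(1-r²) Y)` for independent standard Gaussians `X, Y`), then
`E[H_k(Z) H_l(W)] = δ_{k,l} r^k k!`. -/
theorem mehler_formula {Ω : Type*} [MeasurableSpace Ω] (μ : Measure Ω) [IsProbabilityMeasure μ]
    (Z W : Ω → ℝ) (r : ℝ) (hr : r ∈ Set.Icc (-1 : ℝ) 1)
    (hgauss : Measure.map (fun ω => (Z ω, W ω)) μ =
      Measure.map (fun p : ℝ × ℝ => (p.1, r * p.1 + Real.sqrt (1 - r ^ 2) * p.2))
        ((gaussianReal 0 1).prod (gaussianReal 0 1)))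
    (k l : ℕ) :
    ∫ ω, hermiteFun k (Z ω) * hermiteFun l (W ω) ∂μ =
      (if k = l then r ^ k * (Nat.factorial k : ℝ) else 0) :=
  mehler_formula_general μ Z W r hr hgauss k l
end

section
/- There exists a constant α with 0 < α < 1/2 such that for all d ≥ 2 and all z with 0 ≤ z/√d < π/2, the function A(z/√d) = −√d·cos^{d−1}(z/√d)·sin(z/√d) satisfies |A(z/√d)| ≤ z·exp(−α z²). -/
open Real

/-!
On `[0, π/2]` the quadratic bound `cos θ ≤ 1 - (2/π²) θ² ≤ exp (-(2/π²) θ²)` gives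
`cos^{d-1}(z/√d) ≤ exp (-(2(d-1)/(π² d)) z²) ≤ exp (-z²/π²)`, since `(d-1)/d ≥ 1/2` for `d ≥ 2`;
and `√d sin(z/√d) ≤ z` because `sin x ≤ x`. Hence `α = 1/π²` works.
-/

lemma cos_le_exp_neg_sq {θ : ℝ} (hθ : |θ| ≤ π) : cos θ ≤ exp (-(2 / π ^ 2) * θ ^ 2) := by
  have h := cos_le_one_sub_mul_cos_sq hθ
  have := add_one_le_exp (-(2 / π ^ 2) * θ ^ 2)
  linarith

lemma cos_pow_le_exp_neg_sq {θ : ℝ} (hθ : |θ| ≤ π / 2) (n : ℕ) :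
    cos θ ^ n ≤ exp (-(2 * n / π ^ 2) * θ ^ 2) := by
  obtain ⟨hlo, hhi⟩ := abs_le.mp hθ
  calc cos θ ^ n ≤ exp (-(2 / π ^ 2) * θ ^ 2) ^ n :=
        pow_le_pow_left₀ (cos_nonneg_of_neg_pi_div_two_le_of_le hlo hhi)
          (cos_le_exp_neg_sq (by linarith [pi_pos])) n
    _ = exp (-(2 * n / π ^ 2) * θ ^ 2) := by rw [← exp_nat_mul]; ring_nf

lemma cos_div_sqrt_pow_pred_le {d : ℕ} (hd : 2 ≤ d) {z : ℝ} (hz : 0 ≤ z)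
    (hlt : z / √d < π / 2) : cos (z / √d) ^ (d - 1) ≤ exp (-(1 / π ^ 2) * z ^ 2) := by
  have hd' : (2 : ℝ) ≤ d := by exact_mod_cast hd
  have hθ : |z / √d| ≤ π / 2 := by rw [abs_of_nonneg (by positivity)]; exact hlt.le
  refine (cos_pow_le_exp_neg_sq hθ (d - 1)).trans (exp_le_exp.mpr ?_)
  have hsq : (z / √d) ^ 2 = z ^ 2 / d := by rw [div_pow, sq_sqrt (by positivity)]
  rw [hsq, Nat.cast_sub (by omega : 1 ≤ d), Nat.cast_one, neg_mul, neg_mul, neg_le_neg_iff]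
  have hπ : 0 < π ^ 2 := by positivity
  rw [div_mul_div_comm, one_div_mul_eq_div, div_le_div_iff₀ hπ (by positivity)]
  nlinarith [sq_nonneg z, mul_le_mul_of_nonneg_left hd' (mul_nonneg hπ.le (sq_nonneg z))]

lemma mul_sin_div_le {c z : ℝ} (hc : 0 < c) (hz : 0 ≤ z) : c * sin (z / c) ≤ z :=
  calc c * sin (z / c) ≤ c * (z / c) :=
        mul_le_mul_of_nonneg_left (sin_le (div_nonneg hz hc.le)) hc.le
    _ = z := mul_div_cancel₀ z hc.ne'

/-- There is `0 < α < 1/2` such that for all `d ≥ 2` and `0 ≤ z` with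
`z/√d < π/2`, `|A(z/√d)| = |−√d cos^{d-1}(z/√d) sin(z/√d)| ≤ z exp(−α z²)`. -/
theorem bound_A :
    ∃ α : ℝ, 0 < α ∧ α < 1 / 2 ∧ ∀ d : ℕ, 2 ≤ d → ∀ z : ℝ, 0 ≤ z →
      z / Real.sqrt d < π / 2 →
      |-Real.sqrt d * Real.cos (z / Real.sqrt d) ^ (d - 1) * Real.sin (z / Real.sqrt d)| ≤
        z * Real.exp (-α * z ^ 2) := by
  have hπ : 2 < π ^ 2 := by nlinarith [pi_gt_three]
  refine ⟨1 / π ^ 2, by positivity, one_div_lt_one_div_of_lt two_pos hπ, ?_⟩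
  intro d hd z hz hlt
  have hsd : 0 < √(d : ℝ) := sqrt_pos.mpr (by positivity)
  have hθ : 0 ≤ z / √d := div_nonneg hz hsd.le
  have hsin : 0 ≤ sin (z / √d) := sin_nonneg_of_nonneg_of_le_pi hθ (by linarith [pi_pos])
  have hcos : 0 ≤ cos (z / √d) ^ (d - 1) :=
    pow_nonneg (cos_nonneg_of_neg_pi_div_two_le_of_le (by linarith [pi_pos]) hlt.le) _
  calc |-√d * cos (z / √d) ^ (d - 1) * sin (z / √d)|
      = (√d * sin (z / √d)) * cos (z / √d) ^ (d - 1) := by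
        rw [neg_mul, neg_mul, abs_neg, abs_of_nonneg (by positivity)]; ring
    _ ≤ z * exp (-(1 / π ^ 2) * z ^ 2) :=
        mul_le_mul (mul_sin_div_le hsd hz) (cos_div_sqrt_pow_pred_le hd hz hlt) hcos hz
end

section
/- There exists a constant α with 0 < α < 1/2 such that for all d ≥ 2 and all z with 0 ≤ z/√d < π/2, |cos^{d}(z/√d) − (d−1)·cos^{d−2}(z/√d)·sin²(z/√d)| ≤ (1+z²)·exp(−α z²). -/
open Real

set_option maxHeartbeats 800000

/-- `cos x ≤ exp (-x^2/5)` on `[0, π/2]`. -/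
lemma cos_le_exp_aux {x : ℝ} (h0 : 0 ≤ x) (h1 : x ≤ π / 2) :
    Real.cos x ≤ Real.exp (-x ^ 2 / 5) := by
  have hπ : π ≤ 3.15 := by
    have := Real.pi_lt_d2
    linarith
  have hπ0 : 0 < π := Real.pi_pos
  have hsin : 2 / π * x ≤ Real.sin x := Real.mul_le_sin h0 h1
  have hsin0 : 0 ≤ Real.sin x := le_trans (by positivity) hsin
  have hsq : Real.sin x ^ 2 ≥ 2 * x ^ 2 / 5 := by
    have h2 : (2 / π * x) ^ 2 ≤ Real.sin x ^ 2 := by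
      have := pow_le_pow_left₀ (by positivity) hsin 2
      simpa using this
    have : (2 / π * x) ^ 2 = 4 * x ^ 2 / π ^ 2 := by
      field_simp; ring
    rw [this] at h2
    have hπsq : π ^ 2 ≤ 10 := by nlinarith
    have : 2 * x ^ 2 / 5 ≤ 4 * x ^ 2 / π ^ 2 := by
      rw [div_le_div_iff₀ (by norm_num) (by positivity)]
      nlinarith
    linarith
  have hcos0 : 0 ≤ Real.cos x :=
    Real.cos_nonneg_of_mem_Icc ⟨by linarith, h1⟩
  -- cos² x = 1 - sin² x ≤ exp (-sin² x) ≤ exp (-2x²/5)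
  have hc2 : Real.cos x ^ 2 ≤ Real.exp (-(2 * x ^ 2 / 5)) := by
    have h3 : Real.cos x ^ 2 = 1 - Real.sin x ^ 2 := by
      have := Real.sin_sq_add_cos_sq x; linarith
    have h4 : 1 - Real.sin x ^ 2 ≤ Real.exp (-(Real.sin x ^ 2)) := by
      have := Real.add_one_le_exp (-(Real.sin x ^ 2)); linarith
    have h5 : Real.exp (-(Real.sin x ^ 2)) ≤ Real.exp (-(2 * x ^ 2 / 5)) :=
      Real.exp_le_exp.2 (by linarith)
    linarith
  have key : Real.cos x ^ 2 ≤ Real.exp (-x ^ 2 / 5) ^ 2 := by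
    rw [← Real.exp_nat_mul]
    have : (2 : ℕ) * (-x ^ 2 / 5) = -(2 * x ^ 2 / 5) := by push_cast; ring
    rw [this]
    exact hc2
  exact (pow_le_pow_iff_left₀ hcos0 (Real.exp_pos _).le (by norm_num)).1 key

/-- `1 ≤ (1+x) exp(-x/15)` for `0 ≤ x ≤ 14`. -/
lemma one_le_aux {x : ℝ} (h0 : 0 ≤ x) (h14 : x ≤ 14) :
    1 ≤ (1 + x) * Real.exp (-(1/15) * x) := by
  have hexp : 1 - x / 15 ≤ Real.exp (-(1/15) * x) := by
    have := Real.add_one_le_exp (-(1/15) * x); linarith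
  nlinarith [Real.exp_pos (-(1/15) * x)]

/-- There is `0 < α < 1/2` such that for all `d ≥ 2` and `0 ≤ z` with
`z/√d < π/2`, `|B(z/√d)| = |cos^d(z/√d) − (d−1) cos^{d−2}(z/√d) sin²(z/√d)|
≤ (1+z²) exp(−α z²)`. -/
theorem bound_B :
    ∃ α : ℝ, 0 < α ∧ α < 1 / 2 ∧ ∀ d : ℕ, 2 ≤ d → ∀ z : ℝ, 0 ≤ z →
      z / Real.sqrt d < π / 2 →
      |Real.cos (z / Real.sqrt d) ^ d -
          ((d : ℝ) - 1) * Real.cos (z / Real.sqrt d) ^ (d - 2) *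
            Real.sin (z / Real.sqrt d) ^ 2| ≤
        (1 + z ^ 2) * Real.exp (-α * z ^ 2) := by
  refine ⟨1/15, by norm_num, by norm_num, fun d hd z hz hθlt => ?_⟩
  set θ := z / Real.sqrt d with hθdef
  have hd0 : (0 : ℝ) < d := by positivity
  have hsd : (0 : ℝ) < Real.sqrt d := Real.sqrt_pos.2 hd0
  have hθ0 : 0 ≤ θ := by positivity
  have hθle : θ ≤ π / 2 := hθlt.le
  have hcos0 : 0 ≤ Real.cos θ := Real.cos_nonneg_of_mem_Icc ⟨by linarith [Real.pi_pos], hθle⟩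
  have hcos1 : Real.cos θ ≤ 1 := Real.cos_le_one θ
  have hsin0 : 0 ≤ Real.sin θ := Real.sin_nonneg_of_nonneg_of_le_pi hθ0
    (by linarith [Real.pi_pos])
  have hsinle : Real.sin θ ≤ θ := Real.sin_le hθ0
  have hθsq : θ ^ 2 = z ^ 2 / d := by
    rw [hθdef, div_pow, Real.sq_sqrt hd0.le]
  have hsinsq : Real.sin θ ^ 2 ≤ z ^ 2 / d := by
    rw [← hθsq]
    exact pow_le_pow_left₀ hsin0 hsinle 2
  have hd1 : (1 : ℝ) ≤ (d : ℝ) := by exact_mod_cast Nat.one_le_of_lt hd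
  -- split cos^d
  have hpow : Real.cos θ ^ d = Real.cos θ ^ (d - 2) * Real.cos θ ^ 2 := by
    rw [← pow_add]
    congr 1
    omega
  -- |B| ≤ cos^{d-2} θ * (1 + (d-2) sin² θ)
  have habs : |Real.cos θ ^ d - ((d : ℝ) - 1) * Real.cos θ ^ (d - 2) * Real.sin θ ^ 2|
      ≤ Real.cos θ ^ (d - 2) * (1 + ((d : ℝ) - 2) * Real.sin θ ^ 2) := by
    rw [hpow]
    have hc2 : Real.cos θ ^ 2 = 1 - Real.sin θ ^ 2 := by
      have := Real.sin_sq_add_cos_sq θ; linarith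
    have hnn : (0 : ℝ) ≤ Real.cos θ ^ (d - 2) := pow_nonneg hcos0 _
    rw [abs_le]
    constructor
    · nlinarith [sq_nonneg (Real.sin θ), mul_nonneg hnn (sq_nonneg (Real.sin θ)),
        mul_nonneg (mul_nonneg hnn (sq_nonneg (Real.sin θ))) (sub_nonneg.2 hd1)]
    · nlinarith [sq_nonneg (Real.sin θ), mul_nonneg hnn (sq_nonneg (Real.sin θ)),
        mul_nonneg (mul_nonneg hnn (sq_nonneg (Real.sin θ))) (sub_nonneg.2 hd1)]
  have hfac : 1 + ((d : ℝ) - 2) * Real.sin θ ^ 2 ≤ 1 + z ^ 2 := by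
    have h2d : (2 : ℝ) ≤ d := by exact_mod_cast hd
    have : ((d : ℝ) - 2) * Real.sin θ ^ 2 ≤ ((d : ℝ) - 2) * (z ^ 2 / d) :=
      mul_le_mul_of_nonneg_left hsinsq (by linarith)
    have h3 : ((d : ℝ) - 2) * (z ^ 2 / d) ≤ z ^ 2 := by
      rw [mul_div_assoc'] at *
      rw [div_le_iff₀ hd0]
      nlinarith [sq_nonneg z]
    linarith
  have hfacnn : (0 : ℝ) ≤ 1 + ((d : ℝ) - 2) * Real.sin θ ^ 2 := by
    have h2d : (2 : ℝ) ≤ d := by exact_mod_cast hd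
    nlinarith [sq_nonneg (Real.sin θ)]
  -- now bound cos^{d-2}
  rcases eq_or_lt_of_le hd with hd2 | hd3
  · -- d = 2 case
    have hd2' : d = 2 := hd2.symm
    subst hd2'
    have hc2 : Real.cos θ ^ 2 = 1 - Real.sin θ ^ 2 := by
      have := Real.sin_sq_add_cos_sq θ; linarith
    have hs1 : Real.sin θ ^ 2 ≤ 1 := Real.sin_sq_le_one θ
    have hs0 : 0 ≤ Real.sin θ ^ 2 := sq_nonneg _
    have hB1 : |Real.cos θ ^ 2 -
        (((2:ℕ) : ℝ) - 1) * Real.cos θ ^ (2 - 2) * Real.sin θ ^ 2| ≤ 1 := by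
      rw [abs_le]
      norm_num
      constructor <;> linarith
    refine le_trans hB1 (one_le_aux (sq_nonneg z) ?_)
    have hπ : π ≤ 3.15 := by linarith [Real.pi_lt_d2]
    have hcast : Real.sqrt ((2:ℕ) : ℝ) = Real.sqrt 2 := by norm_num
    rw [hθdef, hcast, div_lt_iff₀ (by positivity : (0:ℝ) < Real.sqrt 2)] at hθlt
    have hs2 : Real.sqrt 2 ^ 2 = 2 := Real.sq_sqrt (by norm_num)
    have hsle : Real.sqrt 2 ≤ 1.5 := by
      rw [show (1.5:ℝ) = Real.sqrt (1.5^2) from (Real.sqrt_sq (by norm_num)).symm]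
      exact Real.sqrt_le_sqrt (by norm_num)
    have hzlt : z < 2.4 := by
      have h1 : π / 2 * Real.sqrt 2 ≤ 2.3625 := by
        nlinarith [Real.pi_pos, Real.sqrt_nonneg 2]
      linarith
    nlinarith [hz, hzlt]
  · -- d ≥ 3 case
    have hd3' : 3 ≤ d := hd3
    have hcospow : Real.cos θ ^ (d - 2) ≤ Real.exp (-(1/15) * z ^ 2) := by
      have h1 : Real.cos θ ≤ Real.exp (-θ ^ 2 / 5) := cos_le_exp_aux hθ0 hθle
      have h2 : Real.cos θ ^ (d - 2) ≤ Real.exp (-θ ^ 2 / 5) ^ (d - 2) :=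
        pow_le_pow_left₀ hcos0 h1 _
      rw [← Real.exp_nat_mul] at h2
      refine h2.trans (Real.exp_le_exp.2 ?_)
      rw [hθsq]
      have hdd : ((d - 2 : ℕ) : ℝ) = (d : ℝ) - 2 := by
        push_cast [Nat.cast_sub (by omega : 2 ≤ d)]; ring
      rw [hdd]
      have h3d : (3 : ℝ) ≤ d := by exact_mod_cast hd3'
      have hkey : ((d:ℝ) - 2) * (-(z ^ 2 / (d:ℝ)) / 5) = -(((d:ℝ) - 2) / (5 * d)) * z ^ 2 := by
        field_simp
      rw [hkey]
      have hcoef : (1 : ℝ) / 15 ≤ ((d:ℝ) - 2) / (5 * d) := by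
        rw [div_le_div_iff₀ (by norm_num) (by positivity)]
        linarith
      nlinarith [sq_nonneg z]
    calc |Real.cos θ ^ d - ((d : ℝ) - 1) * Real.cos θ ^ (d - 2) * Real.sin θ ^ 2|
        ≤ Real.cos θ ^ (d - 2) * (1 + ((d : ℝ) - 2) * Real.sin θ ^ 2) := habs
      _ ≤ Real.exp (-(1/15) * z ^ 2) * (1 + z ^ 2) := by
          apply mul_le_mul hcospow hfac hfacnn (Real.exp_pos _).le
      _ = (1 + z ^ 2) * Real.exp (-(1/15) * z ^ 2) := by ring
end

section
/- For every fixed z ≥ 0, the quantity B(z/√d) = cos^{d}(z/√d) − (d−1)·cos^{d−2}(z/√d)·sin²(z/√d) converges to (1 − z²)·exp(−z²/2) as d → ∞. -/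
open Filter Real Set

lemma aux_sin_div : Tendsto (fun y : ℝ => Real.sin y / y) (nhdsWithin 0 {0}ᶜ) (nhds 1) := by
  have h := Real.hasDerivAt_sin 0
  rw [Real.cos_zero] at h
  have := hasDerivAt_iff_tendsto_slope.mp h
  simpa [slope_fun_def, Real.sin_zero, sub_zero, inv_mul_eq_div] using this

lemma aux_log_one_add : Tendsto (fun t : ℝ => Real.log (1 + t) / t) (nhdsWithin 0 {0}ᶜ) (nhds 1) := by
  have h := Real.hasDerivAt_log (one_ne_zero (α := ℝ))
  have hs := hasDerivAt_iff_tendsto_slope.mp h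
  have hmap : Tendsto (fun t : ℝ => 1 + t) (nhdsWithin 0 {0}ᶜ) (nhdsWithin 1 {1}ᶜ) := by
    apply tendsto_nhdsWithin_of_tendsto_nhds_of_eventually_within
    · have hc : Continuous fun t : ℝ => 1 + t := continuous_const.add continuous_id
      have : Tendsto (fun t : ℝ => 1 + t) (nhds 0) (nhds (1 + 0)) := hc.tendsto 0
      rw [add_zero] at this
      exact this.mono_left nhdsWithin_le_nhds
    · filter_upwards [self_mem_nhdsWithin] with t ht
      simp only [mem_compl_iff, mem_singleton_iff] at ht ⊢
      intro h'; exact ht (by linarith)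
  have := hs.comp hmap
  rw [inv_one] at this
  have heq : (fun t : ℝ => Real.log (1 + t) / t) = (slope Real.log 1) ∘ (fun t : ℝ => 1 + t) := by
    funext t
    simp [slope_fun_def, Real.log_one, add_sub_cancel_left, div_eq_inv_mul]
  rw [heq]
  exact this

lemma aux_half : Tendsto (fun y : ℝ => y / 2) (nhdsWithin 0 {0}ᶜ) (nhdsWithin 0 {0}ᶜ) := by
  apply tendsto_nhdsWithin_of_tendsto_nhds_of_eventually_within
  · have : Tendsto (fun y : ℝ => y / 2) (nhds 0) (nhds (0 / 2)) :=
      (continuous_id.div_const 2).tendsto 0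
    rw [zero_div] at this
    exact this.mono_left nhdsWithin_le_nhds
  · filter_upwards [self_mem_nhdsWithin] with t ht
    simp only [mem_compl_iff, mem_singleton_iff] at ht ⊢
    intro h'; exact ht (by linarith)

lemma aux_cos_sub_one : Tendsto (fun y : ℝ => (Real.cos y - 1) / y ^ 2)
    (nhdsWithin 0 {0}ᶜ) (nhds (-(1/2))) := by
  have hid : ∀ y : ℝ, y ≠ 0 → (Real.cos y - 1) / y ^ 2 = -(1/2) * (Real.sin (y/2) / (y/2)) ^ 2 := by
    intro y hy
    have hc : Real.cos y = 1 - 2 * Real.sin (y/2) ^ 2 := by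
      have h2 : Real.cos (2 * (y/2)) = 2 * Real.cos (y/2) ^ 2 - 1 := Real.cos_two_mul _
      have h3 := Real.sin_sq_add_cos_sq (y/2)
      rw [show 2 * (y/2) = y by ring] at h2
      nlinarith
    rw [hc]
    field_simp
    ring
  have h1 : Tendsto (fun y : ℝ => -(1/2) * (Real.sin (y/2) / (y/2)) ^ 2)
      (nhdsWithin 0 {0}ᶜ) (nhds (-(1/2))) := by
    have := ((aux_sin_div.comp aux_half).pow 2).const_mul (-(1/2) : ℝ)
    simpa using this
  apply h1.congr'
  filter_upwards [self_mem_nhdsWithin] with y hy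
  exact (hid y hy).symm

lemma aux_log_cos : Tendsto (fun y : ℝ => Real.log (Real.cos y) / y ^ 2)
    (nhdsWithin 0 {0}ᶜ) (nhds (-(1/2))) := by
  have hmap : Tendsto (fun y : ℝ => Real.cos y - 1) (nhdsWithin 0 {0}ᶜ) (nhdsWithin 0 {0}ᶜ) := by
    apply tendsto_nhdsWithin_of_tendsto_nhds_of_eventually_within
    · have : Tendsto (fun y : ℝ => Real.cos y - 1) (nhds 0) (nhds (Real.cos 0 - 1)) :=
        (Real.continuous_cos.sub continuous_const).tendsto 0
      rw [Real.cos_zero, sub_self] at this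
      exact this.mono_left nhdsWithin_le_nhds
    · have hmem : Set.Ioo (-1 : ℝ) 1 ∈ nhdsWithin (0:ℝ) {0}ᶜ :=
        nhdsWithin_le_nhds (Ioo_mem_nhds (by norm_num) (by norm_num))
      filter_upwards [self_mem_nhdsWithin, hmem] with y hy hy1
      simp only [mem_compl_iff, mem_singleton_iff] at hy ⊢
      have hc : Real.cos y = 1 - 2 * Real.sin (y/2) ^ 2 := by
        have h2 : Real.cos (2 * (y/2)) = 2 * Real.cos (y/2) ^ 2 - 1 := Real.cos_two_mul _
        have h3 := Real.sin_sq_add_cos_sq (y/2)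
        rw [show 2 * (y/2) = y by ring] at h2
        nlinarith
      have hs : Real.sin (y/2) ≠ 0 := by
        have hpi := Real.pi_gt_three
        rcases hy1 with ⟨hl, hr⟩
        rcases lt_or_gt_of_ne hy with hneg | hpos
        · have hp : 0 < Real.sin (-(y/2)) :=
            Real.sin_pos_of_pos_of_lt_pi (by linarith) (by linarith)
          rw [Real.sin_neg] at hp
          exact ne_of_lt (by linarith)
        · have hp : 0 < Real.sin (y/2) :=
            Real.sin_pos_of_pos_of_lt_pi (by linarith) (by linarith)
          exact ne_of_gt hp
      intro h'
      rw [hc] at h'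
      have : Real.sin (y/2) ^ 2 = 0 := by linarith
      exact hs (pow_eq_zero_iff (by norm_num) |>.mp this)
  have h1 : Tendsto (fun y : ℝ => (Real.log (1 + (Real.cos y - 1)) / (Real.cos y - 1)) *
      ((Real.cos y - 1) / y ^ 2)) (nhdsWithin 0 {0}ᶜ) (nhds (-(1/2))) := by
    have := (aux_log_one_add.comp hmap).mul aux_cos_sub_one
    simpa [Function.comp] using this
  apply h1.congr'
  filter_upwards [hmap.eventually self_mem_nhdsWithin] with y hy
  simp only [mem_compl_iff, mem_singleton_iff] at hy
  rw [show (1 : ℝ) + (Real.cos y - 1) = Real.cos y by ring]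
  field_simp

lemma aux_sqrt_atTop : Tendsto (fun d : ℕ => Real.sqrt d) atTop atTop := by
  rw [tendsto_atTop]
  intro b
  have h2 : Tendsto (fun d : ℕ => (d : ℝ)) atTop atTop := tendsto_natCast_atTop_atTop
  filter_upwards [h2.eventually_ge_atTop (b ^ 2)] with d hd
  calc b ≤ |b| := le_abs_self b
    _ = Real.sqrt (b ^ 2) := (Real.sqrt_sq_eq_abs b).symm
    _ ≤ Real.sqrt d := Real.sqrt_le_sqrt hd

/-- For every fixed `z ≥ 0`,
`B(z/√d) = cos^d(z/√d) − (d−1) cos^{d−2}(z/√d) sin²(z/√d) → (1−z²) exp(−z²/2)`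
as `d → ∞`. -/
theorem limit_B (z : ℝ) (hz : 0 ≤ z) :
    Tendsto (fun d : ℕ =>
        Real.cos (z / Real.sqrt d) ^ d -
          ((d : ℝ) - 1) * Real.cos (z / Real.sqrt d) ^ (d - 2) *
            Real.sin (z / Real.sqrt d) ^ 2)
      atTop (nhds ((1 - z ^ 2) * Real.exp (-z ^ 2 / 2))) := by
  rcases eq_or_lt_of_le hz with hz0 | hzpos
  · -- z = 0
    subst hz0
    simp only [zero_div, Real.cos_zero, Real.sin_zero, one_pow, ne_eq]
    norm_num
  · -- z > 0
    set x : ℕ → ℝ := fun d => z / Real.sqrt d with hxdef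
    have hzne : z ≠ 0 := ne_of_gt hzpos
    -- x d → 0
    have hx0 : Tendsto x atTop (nhds 0) :=
      tendsto_const_nhds.div_atTop aux_sqrt_atTop
    -- eventually x d ≠ 0 (d ≥ 1)
    have hxne : ∀ᶠ d : ℕ in atTop, x d ≠ 0 := by
      filter_upwards [eventually_ge_atTop 1] with d hd
      have hdpos : (0:ℝ) < Real.sqrt d := Real.sqrt_pos.mpr (by exact_mod_cast hd)
      exact ne_of_gt (div_pos hzpos hdpos)
    have hx : Tendsto x atTop (nhdsWithin 0 {0}ᶜ) :=
      tendsto_nhdsWithin_of_tendsto_nhds_of_eventually_within _ hx0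
        (by filter_upwards [hxne] with d hd; simpa using hd)
    -- (x d)^2 = z^2 / d for d ≥ 1
    have hxsq : ∀ᶠ d : ℕ in atTop, x d ^ 2 = z ^ 2 / d := by
      filter_upwards [eventually_ge_atTop 1] with d hd
      have hdpos : (0:ℝ) < (d:ℝ) := by exact_mod_cast hd
      simp only [hxdef, div_pow, Real.sq_sqrt hdpos.le]
    -- d * log (cos (x d)) → -z^2/2
    have hlog : Tendsto (fun d : ℕ => (d : ℝ) * Real.log (Real.cos (x d)))
        atTop (nhds (-z ^ 2 / 2)) := by
      have h1 : Tendsto (fun d : ℕ => z ^ 2 * (Real.log (Real.cos (x d)) / x d ^ 2))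
          atTop (nhds (z ^ 2 * -(1/2))) := (aux_log_cos.comp hx).const_mul _
      rw [show z ^ 2 * -(1/2) = -z ^ 2 / 2 by ring] at h1
      apply h1.congr'
      filter_upwards [hxsq, eventually_ge_atTop 1] with d hd hd1
      have hdpos : (0:ℝ) < (d:ℝ) := by exact_mod_cast hd1
      rw [hd]
      field_simp
    -- eventually cos (x d) > 0
    have hcospos : ∀ᶠ d : ℕ in atTop, 0 < Real.cos (x d) := by
      have hmem : ∀ᶠ d : ℕ in atTop, x d ∈ Set.Ioo (-1 : ℝ) 1 :=
        hx0.eventually (Ioo_mem_nhds (by norm_num) (by norm_num))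
      filter_upwards [hmem] with d hd
      have hpi := Real.pi_gt_three
      exact Real.cos_pos_of_mem_Ioo ⟨by linarith [hd.1], by linarith [hd.2]⟩
    -- cos(x d)^d → exp(-z^2/2)
    have hA : Tendsto (fun d : ℕ => Real.cos (x d) ^ d) atTop
        (nhds (Real.exp (-z ^ 2 / 2))) := by
      have h1 : Tendsto (fun d : ℕ => Real.exp ((d : ℝ) * Real.log (Real.cos (x d))))
          atTop (nhds (Real.exp (-z ^ 2 / 2))) := (Real.continuous_exp.tendsto _).comp hlog
      apply h1.congr'
      filter_upwards [hcospos] with d hd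
      rw [Real.exp_nat_mul, Real.exp_log hd]
    -- cos(x d)^2 → 1
    have hcos2 : Tendsto (fun d : ℕ => Real.cos (x d) ^ 2) atTop (nhds 1) := by
      have : Tendsto (fun d : ℕ => Real.cos (x d) ^ 2) atTop (nhds (Real.cos 0 ^ 2)) :=
        ((Real.continuous_cos.pow 2).tendsto _).comp hx0
      simpa using this
    -- cos(x d)^(d-2) → exp(-z^2/2)
    have hC : Tendsto (fun d : ℕ => Real.cos (x d) ^ (d - 2)) atTop
        (nhds (Real.exp (-z ^ 2 / 2))) := by
      have h1 := hA.div hcos2 one_ne_zero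
      rw [div_one] at h1
      apply h1.congr'
      filter_upwards [hcospos, eventually_ge_atTop 2] with d hd hd2
      rw [pow_sub₀ _ (ne_of_gt hd) hd2]
      simp [Pi.div_apply, div_eq_mul_inv]
    -- (d-1) * sin(x d)^2 → z^2
    have hS : Tendsto (fun d : ℕ => ((d : ℝ) - 1) * Real.sin (x d) ^ 2) atTop
        (nhds (z ^ 2)) := by
      have hratio : Tendsto (fun d : ℕ => ((d : ℝ) - 1) / d) atTop (nhds 1) := by
        have h1 : Tendsto (fun d : ℕ => 1 - 1 / (d:ℝ)) atTop (nhds (1 - 0)) :=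
          tendsto_const_nhds.sub tendsto_one_div_atTop_nhds_zero_nat
        rw [sub_zero] at h1
        apply h1.congr'
        filter_upwards [eventually_ge_atTop 1] with d hd
        have hdpos : (0:ℝ) < (d:ℝ) := by exact_mod_cast hd
        field_simp
      have hsd : Tendsto (fun d : ℕ => (Real.sin (x d) / x d) ^ 2) atTop (nhds 1) := by
        have := (aux_sin_div.comp hx).pow 2
        simpa using this
      have h1 : Tendsto (fun d : ℕ => (((d : ℝ) - 1) / d) * z ^ 2 * (Real.sin (x d) / x d) ^ 2)
          atTop (nhds (1 * z ^ 2 * 1)) := (hratio.mul_const _).mul hsd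
      rw [one_mul, mul_one] at h1
      apply h1.congr'
      filter_upwards [hxsq, hxne, eventually_ge_atTop 1] with d hd hdne hd1
      have hdpos : (0:ℝ) < (d:ℝ) := by exact_mod_cast hd1
      have hx2 : x d ^ 2 ≠ 0 := pow_ne_zero 2 hdne
      rw [div_pow, hd]
      field_simp
    -- combine
    have hfinal := hA.sub (hC.mul hS)
    rw [show Real.exp (-z^2/2) - Real.exp (-z^2/2) * z^2 = (1 - z^2) * Real.exp (-z^2/2)
      by ring] at hfinal
    apply hfinal.congr
    intro d
    simp only [hxdef]
    ring
end

section
/- There exist constants K > 0 and α ∈ (0, 1/2) such that for all d ≥ 2 and all z with 0 ≤ z/√d < π/2, the conditional variance σ²(z/√d) = 1 − A(z/√d)²/(1 − C(z/√d)²) satisfies 0 ≤ 1 − σ²(z/√d) ≤ K·exp(−2α z²). -/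
open Real

/-- `A(θ) = −√d cos^{d−1}(θ) sin(θ)`. -/
noncomputable def kssA (d : ℕ) (θ : ℝ) : ℝ :=
  -Real.sqrt d * Real.cos θ ^ (d - 1) * Real.sin θ

/-- `C(θ) = cos^d(θ)`. -/
noncomputable def kssC (d : ℕ) (θ : ℝ) : ℝ := Real.cos θ ^ d

lemma kss_cos_le_exp_aux {x : ℝ} (h0 : 0 ≤ x) (h : x ≤ π/2) :
    Real.cos x ≤ Real.exp (-(x^2/5)) := by
  have hpi : |x| ≤ π := by
    rw [abs_of_nonneg h0]; linarith [pi_pos]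
  have h1 := Real.cos_le_one_sub_mul_cos_sq hpi
  have hp : π ≤ 3.15 := by linarith [Real.pi_lt_d2]
  have hp0 := Real.pi_pos
  have h5 : (1:ℝ)/5 ≤ 2/π^2 := by
    rw [div_le_div_iff₀ (by norm_num) (by positivity)]; nlinarith
  have h2 : x^2/5 ≤ 2/π^2 * x^2 := by
    calc x^2/5 = 1/5 * x^2 := by ring
    _ ≤ 2/π^2 * x^2 := mul_le_mul_of_nonneg_right h5 (sq_nonneg x)
  have h3 : (1:ℝ) - x^2/5 ≤ Real.exp (-(x^2/5)) := by
    linarith [Real.add_one_le_exp (-(x^2/5))]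
  linarith

lemma kss_geom_aux {u : ℝ} (hu0 : 0 ≤ u) (hu1 : u ≤ 1) (d : ℕ) :
    (d:ℝ) * u^(d-1) * (1-u) ≤ 1 - u^d := by
  have hsum : (d:ℝ) * u^(d-1) ≤ ∑ i ∈ Finset.range d, u^i := by
    have hle : ∀ i ∈ Finset.range d, u^(d-1) ≤ u^i := by
      intro i hi
      have hi' := Finset.mem_range.mp hi
      exact pow_le_pow_of_le_one hu0 hu1 (by omega)
    calc (d:ℝ) * u^(d-1) = ∑ _i ∈ Finset.range d, u^(d-1) := by
          simp [mul_comm]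
    _ ≤ _ := Finset.sum_le_sum hle
  have hg : (∑ i ∈ Finset.range d, u^i) * (u - 1) = u^d - 1 := geom_sum_mul u d
  calc (d:ℝ) * u^(d-1) * (1-u)
      ≤ (∑ i ∈ Finset.range d, u^i) * (1-u) :=
        mul_le_mul_of_nonneg_right hsum (by linarith)
    _ = -((∑ i ∈ Finset.range d, u^i) * (u - 1)) := by ring
    _ = 1 - u^d := by rw [hg]; ring

set_option maxHeartbeats 1000000 in
/-- There exist `K > 0` and `α ∈ (0, 1/2)` such that for all `d ≥ 2` and all
`z ≥ 0` with `z/√d < π/2`, the conditional variance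
`σ²(z/√d) = 1 − A²/(1 − C²)` satisfies `0 ≤ 1 − σ² ≤ K exp(−2α z²)`. -/
theorem bound_sigma_sq :
    ∃ K : ℝ, 0 < K ∧ ∃ α : ℝ, 0 < α ∧ α < 1 / 2 ∧
      ∀ d : ℕ, 2 ≤ d → ∀ z : ℝ, 0 ≤ z → z / Real.sqrt d < π / 2 →
        0 ≤ 1 - (1 - kssA d (z / Real.sqrt d) ^ 2 / (1 - kssC d (z / Real.sqrt d) ^ 2)) ∧
        1 - (1 - kssA d (z / Real.sqrt d) ^ 2 / (1 - kssC d (z / Real.sqrt d) ^ 2)) ≤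
          K * Real.exp (-2 * α * z ^ 2) := by
  refine ⟨40, by norm_num, 1/20, by norm_num, by norm_num, ?_⟩
  intro d hd z hz0 hzπ
  set θ := z / Real.sqrt d with hθdef
  have hd0 : (0:ℝ) < d := by exact_mod_cast (by omega : 0 < d)
  have hs0 : 0 < Real.sqrt d := Real.sqrt_pos.mpr hd0
  have hθ0 : 0 ≤ θ := div_nonneg hz0 hs0.le
  have hθsq : (d:ℝ) * θ^2 = z^2 := by
    rw [hθdef, div_pow, Real.sq_sqrt hd0.le]
    field_simp
  have hexp_eq : (-2 * (1/20:ℝ)) * z^2 = -(z^2/10) := by ring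
  rw [sub_sub_cancel, hexp_eq]
  -- rewrite A² and C² in terms of u = cos²θ
  set u := Real.cos θ ^ 2 with hudef
  have hu0 : 0 ≤ u := sq_nonneg _
  have hsinsq : Real.sin θ ^ 2 = 1 - u := by
    rw [hudef, Real.sin_sq]
  have hA2 : kssA d θ ^ 2 = (d:ℝ) * u^(d-1) * (1 - u) := by
    have h1 : kssA d θ ^ 2
        = Real.sqrt d ^ 2 * (Real.cos θ ^ (d-1))^2 * Real.sin θ ^ 2 := by
      unfold kssA; ring
    rw [h1, Real.sq_sqrt hd0.le, hsinsq, hudef, ← pow_mul, ← pow_mul, mul_comm (d-1) 2]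
  have hC2 : kssC d θ ^ 2 = u^d := by
    unfold kssC
    rw [hudef, ← pow_mul, ← pow_mul, mul_comm d 2]
  rw [hA2, hC2]
  -- case z = 0
  rcases eq_or_lt_of_le hz0 with hz | hz
  · have hθz : θ = 0 := by rw [hθdef, ← hz, zero_div]
    have : (1:ℝ) - u = 0 := by
      rw [hudef, hθz]; simp
    rw [this]
    constructor
    · simp
    · have : (d:ℝ) * u ^ (d - 1) * 0 / (1 - u ^ d) = 0 := by
        rw [mul_zero, zero_div]
      rw [this]
      positivity
  -- case z > 0
  have hθpos : 0 < θ := div_pos hz hs0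
  have hce : Real.cos θ ≤ Real.exp (-(θ^2/5)) := kss_cos_le_exp_aux hθ0 hzπ.le
  have hcos0 : 0 < Real.cos θ :=
    Real.cos_pos_of_mem_Ioo ⟨by linarith [pi_pos], hzπ⟩
  have hue : u ≤ Real.exp (-(2*θ^2/5)) := by
    calc u ≤ (Real.exp (-(θ^2/5)))^2 := pow_le_pow_left₀ hcos0.le hce 2
    _ = Real.exp (-(2*θ^2/5)) := by
        rw [← Real.exp_nat_mul]; ring_nf
  have hu1' : u < 1 := lt_of_le_of_lt hue (by
    rw [Real.exp_lt_one_iff]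
    have : 0 < θ^2 := pow_pos hθpos 2
    linarith)
  have hu1 : u ≤ 1 := hu1'.le
  have hud1 : u^d < 1 := pow_lt_one₀ hu0 hu1' (by omega)
  have hden : 0 < 1 - u^d := by linarith
  have hratio1 : (d:ℝ) * u^(d-1) * (1 - u) / (1 - u^d) ≤ 1 :=
    (div_le_one hden).mpr (kss_geom_aux hu0 hu1 d)
  refine ⟨div_nonneg (mul_nonneg (by positivity) (by linarith : (0:ℝ) ≤ 1-u)) hden.le, ?_⟩
  by_cases hz1 : z ≤ 1
  · -- small z : ratio ≤ 1 ≤ 40 exp(-z²/10)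
    have hz2 : z^2 ≤ 1 := by nlinarith
    have h1 : Real.exp (-(1/10:ℝ)) ≤ Real.exp (-(z^2/10)) := by
      apply Real.exp_le_exp.mpr; linarith
    have h2 : (9:ℝ)/10 ≤ Real.exp (-(1/10:ℝ)) := by
      linarith [Real.add_one_le_exp (-(1/10:ℝ))]
    calc (d:ℝ) * u^(d-1) * (1 - u) / (1 - u^d) ≤ 1 := hratio1
    _ ≤ 40 * Real.exp (-(z^2/10)) := by nlinarith [Real.exp_pos (-(z^2/10))]
  · -- large z
    push_neg at hz1
    -- denominator bound : u^d ≤ exp(-2z²/5) ≤ 3/4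
    have hud : u^d ≤ Real.exp (-(2*z^2/5)) := by
      calc u^d ≤ (Real.exp (-(2*θ^2/5)))^d := pow_le_pow_left₀ hu0 hue d
      _ = Real.exp ((d:ℝ) * (-(2*θ^2/5))) := by rw [← Real.exp_nat_mul]
      _ = Real.exp (-(2*z^2/5)) := by rw [← hθsq]; ring_nf
    have hud34 : u^d ≤ 3/4 := by
      have h1 : Real.exp (-(2*z^2/5)) ≤ Real.exp (-(2/5:ℝ)) := by
        apply Real.exp_le_exp.mpr; nlinarith
      have h2 : Real.exp (-(2/5:ℝ)) ≤ 3/4 := by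
        have h3 : (4:ℝ)/3 ≤ Real.exp (2/5) := by
          linarith [Real.add_one_le_exp (2/5:ℝ)]
        rw [Real.exp_neg]
        calc (Real.exp (2/5:ℝ))⁻¹ ≤ ((4:ℝ)/3)⁻¹ := by
              exact inv_anti₀ (by norm_num) h3
        _ = 3/4 := by norm_num
      linarith
    have hden4 : (1:ℝ)/4 ≤ 1 - u^d := by linarith
    -- numerator bound : A² ≤ z² exp(-z²/5)
    have hsin : 1 - u ≤ θ^2 := by
      rw [← hsinsq]
      have h1 : Real.sin θ ≤ θ := Real.sin_le hθ0
      have h2 : 0 ≤ Real.sin θ := Real.sin_nonneg_of_nonneg_of_le_pi hθ0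
        (by linarith [pi_pos])
      nlinarith
    have hud1' : u^(d-1) ≤ Real.exp (-(z^2/5)) := by
      calc u^(d-1) ≤ (Real.exp (-(2*θ^2/5)))^(d-1) := pow_le_pow_left₀ hu0 hue (d-1)
      _ = Real.exp (((d:ℝ)-1) * (-(2*θ^2/5))) := by
          rw [← Real.exp_nat_mul]
          congr 1
          rw [Nat.cast_sub (by omega : 1 ≤ d)]
          norm_num
      _ ≤ Real.exp (-(z^2/5)) := by
          apply Real.exp_le_exp.mpr
          have hdd : (d:ℝ) ≤ 2*((d:ℝ)-1) := by
            have : (2:ℝ) ≤ d := by exact_mod_cast hd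
            linarith
          have hθ2 : 0 ≤ θ^2 := sq_nonneg θ
          nlinarith [hθsq]
    have hnum : (d:ℝ) * u^(d-1) * (1 - u) ≤ z^2 * Real.exp (-(z^2/5)) := by
      calc (d:ℝ) * u^(d-1) * (1 - u) ≤ (d:ℝ) * Real.exp (-(z^2/5)) * θ^2 := by
            apply mul_le_mul
            · exact mul_le_mul_of_nonneg_left hud1' hd0.le
            · exact hsin
            · linarith [hu1]
            · positivity
      _ = z^2 * Real.exp (-(z^2/5)) := by rw [← hθsq]; ring
    -- combine
    have hzexp : z^2 * Real.exp (-(z^2/10)) ≤ 10 := by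
      have h1 : z^2/10 ≤ Real.exp (z^2/10) := by
        linarith [Real.add_one_le_exp (z^2/10)]
      rw [Real.exp_neg, mul_inv_le_iff₀ (Real.exp_pos _)]
      linarith
    have hsplit : Real.exp (-(z^2/5)) = Real.exp (-(z^2/10)) * Real.exp (-(z^2/10)) := by
      rw [← Real.exp_add]; ring_nf
    calc (d:ℝ) * u^(d-1) * (1 - u) / (1 - u^d)
        ≤ (d:ℝ) * u^(d-1) * (1 - u) / (1/4) :=
          div_le_div_of_nonneg_left
            (mul_nonneg (by positivity) (by linarith : (0:ℝ) ≤ 1-u))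
            (by norm_num) hden4
    _ = 4 * ((d:ℝ) * u^(d-1) * (1 - u)) := by ring
    _ ≤ 4 * (z^2 * Real.exp (-(z^2/5))) := by linarith
    _ = 4 * (z^2 * Real.exp (-(z^2/10))) * Real.exp (-(z^2/10)) := by
        rw [hsplit]; ring
    _ ≤ 4 * 10 * Real.exp (-(z^2/10)) := by
        apply mul_le_mul_of_nonneg_right _ (Real.exp_pos _).le
        linarith
    _ = 40 * Real.exp (-(z^2/10)) := by ring
end
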